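/- arXiv:1804.10772 — 2 statements merged into one kernel-verified Lean document; each statement's English description precedes it below -/
import Mathlib

section
/- Let m ≥ 1 be an integer. For integers x_1,...,x_n and the formula φ ≡ ∃y ∈ Z. ⋀_i (x_i + α_i ≤ y ≤ x_i + β_i ∧ y ≡ x_i + γ_i mod m), with integer constants α_i ≤ β_i and γ_i ∈ {0,...,m-1}, φ is equivalent to the quantifier-free formula ⋁_{δ=0}^{m-1} ⋁_j ⋀_i (x_i + α_i ≤ x_j + α_j + δ ≤ x_i + β_i ∧ x_j + α_j + δ ≡ x_i + γ_i mod m). -/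
theorem integer_qe (n : ℕ) (hn : 0 < n) (m : ℤ) (hm : 1 ≤ m)
    (x α β γ : Fin n → ℤ)
    (hαβ : ∀ i, α i ≤ β i) (hγ : ∀ i, 0 ≤ γ i ∧ γ i < m) :
    (∃ y : ℤ, ∀ i,
        x i + α i ≤ y ∧ y ≤ x i + β i ∧ y ≡ x i + γ i [ZMOD m]) ↔
      ∃ δ : ℤ, 0 ≤ δ ∧ δ < m ∧ ∃ j : Fin n, ∀ i,
        x i + α i ≤ x j + α j + δ ∧ x j + α j + δ ≤ x i + β i ∧
        x j + α j + δ ≡ x i + γ i [ZMOD m] := by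
  have hm0 : 0 < m := hm
  constructor
  · rintro ⟨y, hy⟩
    have : Nonempty (Fin n) := ⟨⟨0, hn⟩⟩
    obtain ⟨j, hj⟩ := Finite.exists_max (fun i => x i + α i)
    set L := x j + α j with hL
    set δ := (y - L) % m with hδ
    have hyL : L ≤ y := (hy j).1
    have h1 : 0 ≤ δ := Int.emod_nonneg _ (by omega)
    have h2 : δ < m := Int.emod_lt_of_pos _ hm0
    have hkey : y - L = m * ((y - L) / m) + δ := (Int.mul_ediv_add_emod _ _).symm
    have hq : 0 ≤ (y - L) / m := Int.ediv_nonneg (by omega) (by omega)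
    have hmq : 0 ≤ m * ((y - L) / m) := mul_nonneg (by omega) hq
    have hle : L + δ ≤ y := by omega
    have hcong : L + δ ≡ y [ZMOD m] := by
      have : δ ≡ y - L [ZMOD m] := Int.emod_emod_of_dvd _ dvd_rfl
      have := this.add_left L
      simpa using this
    refine ⟨δ, h1, h2, j, fun i => ?_⟩
    refine ⟨le_trans (hj i) (by omega), le_trans hle (hy i).2.1,
      hcong.trans (hy i).2.2⟩
  · rintro ⟨δ, h0, h1, j, hj⟩
    exact ⟨x j + α j + δ, hj⟩
end

section
/- If some lower bound is attained, a satisfying witness can be taken near the maximal lower bound: for integers a_1,...,a_n, constants α_i, β_i, γ_i, modulus m ≥ 1, if a_0 satisfies a_i + α_i ≤ a_0 ≤ a_i + β_i and a_0 ≡ a_i + γ_i (mod m) for all i, and j maximizes a_j + α_j, then δ := (a_0 - (a_j + α_j)) mod m satisfies 0 ≤ δ < m and a_j + α_j + δ also satisfies all the bound and congruence constraints. -/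
theorem witness_near_max_lower_bound (n : ℕ) (m : ℤ) (hm : 1 ≤ m)
    (a α β γ : Fin n → ℤ) (a0 : ℤ)
    (hsat : ∀ i, a i + α i ≤ a0 ∧ a0 ≤ a i + β i ∧ a0 ≡ a i + γ i [ZMOD m])
    (j : Fin n) (hj : ∀ i, a i + α i ≤ a j + α j) :
    0 ≤ (a0 - (a j + α j)) % m ∧ (a0 - (a j + α j)) % m < m ∧
      ∀ i, a i + α i ≤ a j + α j + (a0 - (a j + α j)) % m ∧
        a j + α j + (a0 - (a j + α j)) % m ≤ a i + β i ∧
        a j + α j + (a0 - (a j + α j)) % m ≡ a i + γ i [ZMOD m] := by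
  have hm0 : 0 < m := hm
  set L := a j + α j with hL
  have h0 : 0 ≤ (a0 - L) % m := Int.emod_nonneg _ (by omega)
  have h1 : (a0 - L) % m < m := Int.emod_lt_of_pos _ hm0
  have hge : 0 ≤ a0 - L := by have := (hsat j).1; omega
  have hle : (a0 - L) % m ≤ a0 - L := by
    have hq : 0 ≤ (a0 - L) / m := Int.ediv_nonneg hge hm0.le
    have heq := Int.emod_add_mul_ediv (a0 - L) m
    nlinarith [heq, hq, hm0]
  have hm1 : (a0 - L) % m ≡ a0 - L [ZMOD m] := Int.emod_emod_of_dvd _ dvd_rfl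
  have hmod : L + (a0 - L) % m ≡ a0 [ZMOD m] := by
    have := (Int.ModEq.refl L).add hm1
    simpa using this
  refine ⟨h0, h1, fun i => ⟨?_, ?_, ?_⟩⟩
  · have := hj i; omega
  · have := (hsat i).2.1; omega
  · exact hmod.trans (hsat i).2.2
end
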